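/- arXiv:1811.04800 — 4 statements merged into one kernel-verified Lean document; each statement's English description precedes it below -/
import Mathlib

section
/- Let Π = (𝒜, ℰ, ℛ) be an epistemic logic program and let Π' = (𝒜', ℰ', ℛ) be an epistemic logic program with the same set of rules but with 𝒜' ⊋ 𝒜 and ℰ' ⊋ ℰ. Then the set of candidate world views of Π equals the set of candidate world views of Π'. -/
variable {V : Type}

/-- A (default-negation) literal: an atom or its default negation. -/
inductive Lit (V : Type) : Type
  | pos (a : V) : Lit V
  | neg (a : V) : Lit V

namespace Lit

/-- `I ⊨ ℓ`. -/
def sat (I : Set V) : Lit V → Prop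
  | pos a => a ∈ I
  | neg a => a ∉ I

/-- The complementary literal (so that `I ⊨ ¬ℓ` iff `I ⊨ ℓ.flip`). -/
def flip : Lit V → Lit V
  | pos a => neg a
  | neg a => pos a

/-- The underlying atom of a literal. -/
def atom : Lit V → V
  | pos a => a
  | neg a => a

end Lit

/-- A standard (ASP) rule `head ← pos, {¬ℓ | ℓ ∈ neg}`; the set `neg` collects the
literals occurring under one extra default negation in the body (so an atom `a ∈ pos`
is a positive body atom, `Lit.pos c ∈ neg` encodes the body element `¬c`, and
`Lit.neg d ∈ neg` encodes the doubly negated body element `¬¬d`). -/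
structure Rule (V : Type) : Type where
  head : Set V
  pos : Set V
  neg : Set (Lit V)

namespace Rule

/-- The rule only uses atoms from `A`. -/
def wf (r : Rule V) (A : Set V) : Prop :=
  r.head ⊆ A ∧ r.pos ⊆ A ∧ ∀ ℓ ∈ r.neg, ℓ.atom ∈ A

/-- `I` is a model of the rule. -/
def sat (I : Set V) (r : Rule V) : Prop :=
  (r.pos ⊆ I ∧ ∀ ℓ ∈ r.neg, ¬ ℓ.sat I) → ∃ a ∈ r.head, a ∈ I

/-- `X` satisfies the GL-reduct of the rule w.r.t. `Y`: if the rule survives the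
reduct (no negated body literal is satisfied by `Y`), then `X` satisfies the
remaining rule `head ← pos`. -/
def redSat (Y X : Set V) (r : Rule V) : Prop :=
  (∀ ℓ ∈ r.neg, ¬ ℓ.sat Y) → (r.pos ⊆ X → ∃ a ∈ r.head, a ∈ X)

end Rule

/-- A ground logic program `(𝒜, ℛ)`. -/
structure Program (V : Type) : Type where
  A : Set V
  R : Set (Rule V)

namespace Program

def wf (P : Program V) : Prop := ∀ r ∈ P.R, r.wf P.A

/-- `I ⊨ P`. -/
def model (P : Program V) (I : Set V) : Prop := ∀ r ∈ P.R, r.sat I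

/-- `X ⊨ P^Y` (the GL-reduct). -/
def redModel (P : Program V) (Y X : Set V) : Prop := ∀ r ∈ P.R, r.redSat Y X

/-- `M` is an answer set of `P`. -/
def answerSet (P : Program V) (M : Set V) : Prop :=
  M ⊆ P.A ∧ P.model M ∧ ¬ ∃ M', M' ⊂ M ∧ P.redModel M M'

/-- `AS(P)`, the set of answer sets. -/
def AS (P : Program V) : Set (Set V) := {M | P.answerSet M}

/-- The set of SE-models `(X,Y)` with `X ⊆ Y ⊆ 𝒜`, `Y ⊨ P` and `X ⊨ P^Y`. -/
def SE (P : Program V) : Set (Set V × Set V) :=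
  {p | p.1 ⊆ p.2 ∧ p.2 ⊆ P.A ∧ P.model p.2 ∧ P.redModel p.2 p.1}

/-- Componentwise union of programs. -/
def union (P₁ P₂ : Program V) : Program V := ⟨P₁.A ∪ P₂.A, P₁.R ∪ P₂.R⟩

/-- Strong equivalence of plain logic programs. -/
def strongEq (P₁ P₂ : Program V) : Prop :=
  ∀ P : Program V, P.wf → (P₁.union P).AS = (P₂.union P).AS

end Program

/-- An ELP rule `head ← opos, ¬oneg, not epos, ¬ not eneg`: epistemic literals `not ℓ`
are identified with the literal `ℓ` they negate; `epos` collects the literals occurring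
under plain epistemic negation and `eneg` those occurring under default-negated
epistemic negation. -/
structure ERule (V : Type) : Type where
  head : Set V
  opos : Set V
  oneg : Set (Lit V)
  epos : Set (Lit V)
  eneg : Set (Lit V)

namespace ERule

/-- The rule only uses atoms from `A` and epistemic literals from `E`. -/
def wf (r : ERule V) (A : Set V) (E : Set (Lit V)) : Prop :=
  r.head ⊆ A ∧ r.opos ⊆ A ∧ (∀ ℓ ∈ r.oneg, ℓ.atom ∈ A) ∧ r.epos ⊆ E ∧ r.eneg ⊆ E

/-- The rule of the epistemic reduct w.r.t. guess `Φ` (meaningful when no `eneg`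
literal belongs to `Φ`, in which case: epistemic literals `not ℓ ∈ Φ` become `⊤`,
the remaining `not ℓ` in `epos` become `¬ℓ`, and `¬ not ℓ` in `eneg` becomes `¬¬ℓ`,
i.e. `¬(ℓ.flip)`, reading triple negations as single ones). -/
def reduct (r : ERule V) (Φ : Set (Lit V)) : Rule V :=
  ⟨r.head, r.opos, r.oneg ∪ (r.epos \ Φ) ∪ (Lit.flip '' r.eneg)⟩

/-- The underlying plain rule of an epistemic-negation-free ELP rule. -/
def toRule (r : ERule V) : Rule V := ⟨r.head, r.opos, r.oneg⟩

end ERule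

/-- A plain rule viewed as an ELP rule. -/
def Rule.toERule (r : Rule V) : ERule V := ⟨r.head, r.pos, r.neg, ∅, ∅⟩

/-- An epistemic logic program `(𝒜, ℰ, ℛ)`. -/
structure ELP (V : Type) : Type where
  A : Set V
  E : Set (Lit V)
  R : Set (ERule V)

/-- `I` is `Φ`-compatible w.r.t. `E`. -/
def compatible (E Φ : Set (Lit V)) (I : Set (Set V)) : Prop :=
  I.Nonempty ∧ (∀ ℓ ∈ Φ, ∃ J ∈ I, ¬ ℓ.sat J) ∧ (∀ ℓ ∈ E \ Φ, ∀ J ∈ I, ℓ.sat J)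

/-- `Φ` is realizable in the set `I` of interpretations (w.r.t. `E`). -/
def realizableIn (E Φ : Set (Lit V)) (I : Set (Set V)) : Prop :=
  ∃ I', I' ⊆ I ∧ compatible E Φ I'

/-- A guess `Φ` is consistent w.r.t. `E`: whenever `E` contains both `not a` and
`not ¬a`, `Φ` contains at least one of them. -/
def consistentGuess (E Φ : Set (Lit V)) : Prop :=
  ∀ a : V, Lit.pos a ∈ E → Lit.neg a ∈ E → (Lit.pos a ∈ Φ ∨ Lit.neg a ∈ Φ)

namespace ELP

/-- Well-formedness: `E` consists of epistemic literals over `A`, and every rule is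
over `A` and `E`. -/
def wf (P : ELP V) : Prop :=
  (∀ ℓ ∈ P.E, ℓ.atom ∈ P.A) ∧ ∀ r ∈ P.R, r.wf P.A P.E

/-- An epistemic-negation-free (plain ASP) program viewed as an ELP. -/
def isASP (P : ELP V) : Prop := P.E = ∅ ∧ ∀ r ∈ P.R, r.epos = ∅ ∧ r.eneg = ∅

/-- Componentwise union of ELPs. -/
def union (P₁ P₂ : ELP V) : ELP V := ⟨P₁.A ∪ P₂.A, P₁.E ∪ P₂.E, P₁.R ∪ P₂.R⟩

/-- The epistemic reduct `P^Φ`: rules with some `eneg` literal in `Φ` are deleted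
(their body contains `¬⊤`), the remaining rules are reduced. -/
def eReduct (P : ELP V) (Φ : Set (Lit V)) : Program V :=
  ⟨P.A, {q | ∃ r ∈ P.R, (∀ ℓ ∈ r.eneg, ℓ ∉ Φ) ∧ q = r.reduct Φ}⟩

/-- `M` is a candidate world view of `P` w.r.t. the guess `Φ`. -/
def isCWVwrt (P : ELP V) (Φ : Set (Lit V)) (M : Set (Set V)) : Prop :=
  Φ ⊆ P.E ∧ M = (P.eReduct Φ).AS ∧ compatible P.E Φ M

/-- `M` is a candidate world view of `P`. -/
def isCWV (P : ELP V) (M : Set (Set V)) : Prop := ∃ Φ, P.isCWVwrt Φ M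

/-- `M` is a world view of `P`: a CWV whose associated guess is subset-maximal. -/
def isWV (P : ELP V) (M : Set (Set V)) : Prop :=
  ∃ Φ, P.isCWVwrt Φ M ∧ ∀ Φ' M', P.isCWVwrt Φ' M' → ¬ Φ ⊂ Φ'

/-- `Φ` is realizable in `P`: realizable in the set of models of `P^Φ`. -/
def realizable (P : ELP V) (Φ : Set (Lit V)) : Prop :=
  realizableIn P.E Φ {I | I ⊆ P.A ∧ (P.eReduct Φ).model I}

/-- The SE-function of `P`: `SE(Π^Φ)` if `Φ` is realizable in `P`, and `∅` otherwise. -/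
def SEfun (P : ELP V) (Φ : Set (Lit V)) : Set (Set V × Set V) :=
  {p | P.realizable Φ ∧ p ∈ (P.eReduct Φ).SE}

/-- CWV-equivalence. -/
def cwvEq (P₁ P₂ : ELP V) : Prop := ∀ M, P₁.isCWV M ↔ P₂.isCWV M

/-- WV-equivalence. -/
def wvEq (P₁ P₂ : ELP V) : Prop := ∀ M, P₁.isWV M ↔ P₂.isWV M

/-- Strong ELP-CWV-equivalence. -/
def strongELPCWVEq (P₁ P₂ : ELP V) : Prop :=
  ∀ Q : ELP V, Q.wf → cwvEq (P₁.union Q) (P₂.union Q)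

/-- Strong ELP-WV-equivalence. -/
def strongELPWVEq (P₁ P₂ : ELP V) : Prop :=
  ∀ Q : ELP V, Q.wf → wvEq (P₁.union Q) (P₂.union Q)

/-- Strong ASP-CWV-equivalence. -/
def strongASPCWVEq (P₁ P₂ : ELP V) : Prop :=
  ∀ Q : ELP V, Q.wf → Q.isASP → cwvEq (P₁.union Q) (P₂.union Q)

/-- Strong ASP-WV-equivalence. -/
def strongASPWVEq (P₁ P₂ : ELP V) : Prop :=
  ∀ Q : ELP V, Q.wf → Q.isASP → wvEq (P₁.union Q) (P₂.union Q)

end ELP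

/-- The Gelfond-CWA program `p' ← ¬ not ¬p` over `𝒜 = {p, p'}`, `ℰ = {not p, not ¬p}`. -/
def GelfondCWA (p p' : V) : ELP V :=
  ⟨{p, p'}, {Lit.pos p, Lit.neg p}, {⟨{p'}, ∅, ∅, ∅, {Lit.neg p}⟩}⟩

/-- The Shen-Eiter-CWA program `p' ← not p` over `𝒜 = {p, p'}`, `ℰ = {not p, not ¬p}`. -/
def ShenEiterCWA (p p' : V) : ELP V :=
  ⟨{p, p'}, {Lit.pos p, Lit.neg p}, {⟨{p'}, ∅, ∅, {Lit.pos p}, ∅⟩}⟩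

lemma Lit.atom_flip (ℓ : Lit V) : ℓ.flip.atom = ℓ.atom := by cases ℓ <;> rfl

namespace Program

/-- Enlarging the atom domain of a program over `A` adds no answer sets: an answer set `M`
of the larger program must lie inside `A`, since otherwise `M ∩ A` would model its reduct. -/
lemma AS_eq_of_subset {A A' : Set V} {R : Set (Rule V)} (hA : A ⊆ A')
    (hwf : ∀ r ∈ R, r.wf A) : (Program.mk A R).AS = (Program.mk A' R).AS := by
  ext M
  refine ⟨fun ⟨hMA, hM, hmin⟩ => ⟨hMA.trans hA, hM, hmin⟩, fun ⟨_, hM, hmin⟩ => ⟨?_, hM, hmin⟩⟩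
  by_contra hMA
  refine hmin ⟨M ∩ A, ⟨Set.inter_subset_left, fun h => hMA fun x hx => (h hx).2⟩, ?_⟩
  intro r hr hneg hpos
  obtain ⟨a, ha, haM⟩ := hM r hr ⟨hpos.trans Set.inter_subset_left, hneg⟩
  exact ⟨a, ha, haM, (hwf r hr).1 ha⟩

end Program

namespace ERule

variable {r : ERule V} {A : Set V} {E : Set (Lit V)}

lemma reduct_inter (hr : r.epos ⊆ E) (Φ : Set (Lit V)) : r.reduct (Φ ∩ E) = r.reduct Φ := by
  have : r.epos \ (Φ ∩ E) = r.epos \ Φ := by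
    ext ℓ
    constructor
    · exact fun ⟨hℓ, hℓΦ⟩ => ⟨hℓ, fun h => hℓΦ ⟨h, hr hℓ⟩⟩
    · exact fun ⟨hℓ, hℓΦ⟩ => ⟨hℓ, fun h => hℓΦ h.1⟩
  simp only [reduct, this]

lemma wf_reduct (hr : r.wf A E) (hE : ∀ ℓ ∈ E, ℓ.atom ∈ A) (Φ : Set (Lit V)) :
    (r.reduct Φ).wf A := by
  obtain ⟨hhead, hopos, honeg, hepos, heneg⟩ := hr
  refine ⟨hhead, hopos, ?_⟩
  rintro ℓ ((hℓ | ⟨hℓ, -⟩) | ⟨ℓ, hℓ, rfl⟩)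
  · exact honeg ℓ hℓ
  · exact hE ℓ (hepos hℓ)
  · exact ℓ.atom_flip ▸ hE ℓ (heneg hℓ)

end ERule

namespace ELP

lemma eReduct_inter {A : Set V} {E : Set (Lit V)} {R : Set (ERule V)}
    (hR : ∀ r ∈ R, r.epos ⊆ E ∧ r.eneg ⊆ E) (Φ : Set (Lit V)) :
    (ELP.mk A E R).eReduct (Φ ∩ E) = ⟨A, ((ELP.mk A E R).eReduct Φ).R⟩ := by
  simp only [eReduct, Program.mk.injEq, true_and]
  ext q
  refine exists_congr fun r => and_congr_right fun hr => ?_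
  rw [ERule.reduct_inter (hR r hr).1]
  exact and_congr_left fun _ =>
    forall₂_congr fun ℓ hℓ => not_congr ⟨And.left, fun h => ⟨h, (hR r hr).2 hℓ⟩⟩

lemma AS_eReduct_inter {A A' : Set V} {E E' : Set (Lit V)} {R : Set (ERule V)}
    (hwf : (ELP.mk A E R).wf) (hA : A ⊆ A') (Φ : Set (Lit V)) :
    ((ELP.mk A E R).eReduct (Φ ∩ E)).AS = ((ELP.mk A' E' R).eReduct Φ).AS := by
  obtain ⟨hE, hR⟩ := hwf
  rw [eReduct_inter (fun r hr => ⟨(hR r hr).2.2.2.1, (hR r hr).2.2.2.2⟩)]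
  refine Program.AS_eq_of_subset hA ?_
  rintro q ⟨r, hr, -, rfl⟩
  exact ERule.wf_reduct (hR r hr) hE Φ

end ELP

section compatible

variable {E E' Φ : Set (Lit V)} {M : Set (Set V)}

lemma compatible.inter (hEE' : E ⊆ E') (h : compatible E' Φ M) : compatible E (Φ ∩ E) M :=
  ⟨h.1, fun ℓ hℓ => h.2.1 ℓ hℓ.1,
    fun ℓ ⟨hℓE, hℓΦ⟩ => h.2.2 ℓ ⟨hEE' hℓE, fun hℓ => hℓΦ ⟨hℓ, hℓE⟩⟩⟩

/-- The new epistemic literals go into the guess exactly when some interpretation of `M`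
violates them, which is what compatibility w.r.t. `E'` demands. -/
def extendGuess (E E' Φ : Set (Lit V)) (M : Set (Set V)) : Set (Lit V) :=
  Φ ∪ {ℓ | ℓ ∈ E' \ E ∧ ∃ J ∈ M, ¬ ℓ.sat J}

lemma extendGuess_subset (hEE' : E ⊆ E') (hΦ : Φ ⊆ E) : extendGuess E E' Φ M ⊆ E' :=
  Set.union_subset (hΦ.trans hEE') fun _ hℓ => hℓ.1.1

lemma extendGuess_inter (hΦ : Φ ⊆ E) : extendGuess E E' Φ M ∩ E = Φ := by
  rw [extendGuess, Set.union_inter_distrib_right, Set.inter_eq_left.mpr hΦ,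
    Set.union_eq_left]
  exact fun ℓ hℓ => absurd hℓ.2 hℓ.1.1.2

lemma compatible.extendGuess (h : compatible E Φ M) :
    compatible E' (extendGuess E E' Φ M) M := by
  refine ⟨h.1, ?_, ?_⟩
  · rintro ℓ (hℓ | hℓ)
    · exact h.2.1 ℓ hℓ
    · exact hℓ.2
  · rintro ℓ ⟨hℓE', hℓΦ⟩ J hJ
    by_cases hℓE : ℓ ∈ E
    · exact h.2.2 ℓ ⟨hℓE, fun hℓ => hℓΦ (Or.inl hℓ)⟩ J hJ
    · by_contra hℓJ
      exact hℓΦ (Or.inr ⟨⟨hℓE', hℓE⟩, J, hJ, hℓJ⟩)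

end compatible

theorem stmt0_general {V : Type} (A A' : Set V) (E E' : Set (Lit V)) (R : Set (ERule V))
    (hwf : (ELP.mk A E R).wf)
    (hA : A ⊂ A') (hE : E ⊂ E') :
    {M | (ELP.mk A E R).isCWV M} = {M | (ELP.mk A' E' R).isCWV M} := by
  ext M
  constructor
  · rintro ⟨Φ, hΦ, rfl, hcomp⟩
    refine ⟨extendGuess E E' Φ _, extendGuess_subset hE.subset hΦ, ?_, hcomp.extendGuess⟩
    rw [← ELP.AS_eReduct_inter hwf hA.subset, extendGuess_inter hΦ]
  · rintro ⟨Φ, -, rfl, hcomp⟩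
    exact ⟨Φ ∩ E, Set.inter_subset_right, (ELP.AS_eReduct_inter hwf hA.subset Φ).symm,
      hcomp.inter hE.subset⟩

/-- Extending both the atom domain and the epistemic-literal domain of an
ELP (keeping the rules) does not change its candidate world views. -/
theorem stmt0 {V : Type} (A A' : Set V) (E E' : Set (Lit V)) (R : Set (ERule V))
    (hwf : (ELP.mk A E R).wf) (hE'A' : ∀ ℓ ∈ E', ℓ.atom ∈ A')
    (hA : A ⊂ A') (hE : E ⊂ E') :
    {M | (ELP.mk A E R).isCWV M} = {M | (ELP.mk A' E' R).isCWV M} :=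
  stmt0_general A A' E E' R hwf hA hE
end

section
/- Let Π = (𝒜, ℰ, ℛ) be an epistemic logic program and let Π' = (𝒜, ℰ', ℛ) be an epistemic logic program with the same set of rules and atom domain, but with ℰ' ⊋ ℰ and ℰ'∖ℰ = {not ℓ} for a single epistemic literal not ℓ. Then CWV(Π) = CWV(Π'). -/
/-!
Compatibility pins the guess down: if `Φ ⊆ ℰ` and `ℳ` is `Φ`-compatible, then `Φ` is
exactly the set of `not m ∈ ℰ` that are true in `ℳ`. Hence `ℳ` is a CWV iff it is nonempty
and equals `AS(Π^Φ)` for this induced guess. Since the rules mention only epistemic literals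
of `ℰ`, the reduct `Π^Φ` depends only on `Φ ∩ ℰ`, and enlarging `ℰ` to any `ℰ' ⊇ ℰ` changes
the induced guess only outside `ℰ`; so the reduct, and with it the set of CWVs, stays the same.
-/

variable {V : Type}

/-- The guess read off a set of interpretations: the epistemic literals `not m ∈ E`
that hold in it. -/
def inducedGuess (E : Set (Lit V)) (M : Set (Set V)) : Set (Lit V) :=
  {m ∈ E | ∃ J ∈ M, ¬ m.sat J}

theorem compatible_iff_eq_inducedGuess {E Φ : Set (Lit V)} {M : Set (Set V)} (hΦ : Φ ⊆ E) :
    compatible E Φ M ↔ M.Nonempty ∧ Φ = inducedGuess E M := by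
  constructor
  · rintro ⟨hne, hΦsat, hcompl⟩
    refine ⟨hne, Set.ext fun m => ⟨fun hm => ⟨hΦ hm, hΦsat m hm⟩, fun ⟨hmE, J, hJ, hJm⟩ => ?_⟩⟩
    by_contra hmΦ
    exact hJm (hcompl m ⟨hmE, hmΦ⟩ J hJ)
  · rintro ⟨hne, rfl⟩
    refine ⟨hne, fun m hm => hm.2, fun m ⟨hmE, hmΦ⟩ J hJ => ?_⟩
    by_contra hJm
    exact hmΦ ⟨hmE, J, hJ, hJm⟩

theorem mem_inducedGuess_iff_of_subset {E E' : Set (Lit V)} (hEE' : E ⊆ E')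
    (M : Set (Set V)) {m : Lit V} (hm : m ∈ E) :
    m ∈ inducedGuess E M ↔ m ∈ inducedGuess E' M :=
  ⟨fun h => ⟨hEE' hm, h.2⟩, fun h => ⟨hm, h.2⟩⟩

theorem ERule.reduct_congr {r : ERule V} {S Φ₁ Φ₂ : Set (Lit V)} (hr : r.epos ⊆ S)
    (hΦ : ∀ m ∈ S, m ∈ Φ₁ ↔ m ∈ Φ₂) : r.reduct Φ₁ = r.reduct Φ₂ := by
  have hdiff : r.epos \ Φ₁ = r.epos \ Φ₂ := by
    ext m
    exact and_congr_right fun hm => not_congr (hΦ m (hr hm))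
  simp only [ERule.reduct, hdiff]

namespace ELP

theorem eReduct_congr {P : ELP V} {S Φ₁ Φ₂ : Set (Lit V)}
    (hP : ∀ r ∈ P.R, r.epos ⊆ S ∧ r.eneg ⊆ S) (hΦ : ∀ m ∈ S, m ∈ Φ₁ ↔ m ∈ Φ₂) :
    P.eReduct Φ₁ = P.eReduct Φ₂ := by
  simp only [eReduct, Program.mk.injEq, true_and]
  ext q
  refine exists_congr fun r => and_congr_right fun hr => ?_
  have hkept : (∀ m ∈ r.eneg, m ∉ Φ₁) ↔ ∀ m ∈ r.eneg, m ∉ Φ₂ :=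
    forall₂_congr fun m hm => not_congr (hΦ m ((hP r hr).2 hm))
  rw [hkept, ERule.reduct_congr (hP r hr).1 hΦ]

theorem isCWV_iff (P : ELP V) (M : Set (Set V)) :
    P.isCWV M ↔ M.Nonempty ∧ M = (P.eReduct (inducedGuess P.E M)).AS := by
  constructor
  · rintro ⟨Φ, hΦE, hM, hcomp⟩
    obtain ⟨hne, rfl⟩ := (compatible_iff_eq_inducedGuess hΦE).mp hcomp
    exact ⟨hne, hM⟩
  · rintro ⟨hne, hM⟩
    exact ⟨inducedGuess P.E M, fun m hm => hm.1, hM,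
      (compatible_iff_eq_inducedGuess fun m hm => hm.1).mpr ⟨hne, rfl⟩⟩

theorem isCWV_mk_iff_of_subset {A : Set V} {E E' : Set (Lit V)} {R : Set (ERule V)}
    (hEE' : E ⊆ E') (hR : ∀ r ∈ R, r.epos ⊆ E ∧ r.eneg ⊆ E) (M : Set (Set V)) :
    (ELP.mk A E R).isCWV M ↔ (ELP.mk A E' R).isCWV M := by
  rw [isCWV_iff, isCWV_iff]
  have hreduct : (ELP.mk A E R).eReduct (inducedGuess E M)
      = (ELP.mk A E' R).eReduct (inducedGuess E' M) :=
    eReduct_congr (P := ELP.mk A E R) hR fun _ => mem_inducedGuess_iff_of_subset hEE' M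
  rw [hreduct]

end ELP

theorem stmt3_general {V : Type} (A : Set V) (E E' : Set (Lit V)) (R : Set (ERule V))
    (hwf : (ELP.mk A E R).wf) (hE : E ⊂ E') :
    {M | (ELP.mk A E R).isCWV M} = {M | (ELP.mk A E' R).isCWV M} :=
  Set.ext <| ELP.isCWV_mk_iff_of_subset hE.subset fun r hr =>
    ⟨(hwf.2 r hr).2.2.2.1, (hwf.2 r hr).2.2.2.2⟩

/-- Extending the epistemic-literal domain of an ELP by a single
epistemic literal (keeping the rules and the atom domain) does not change its
candidate world views. -/
theorem stmt3 {V : Type} (A : Set V) (E E' : Set (Lit V)) (R : Set (ERule V))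
    (ℓ : Lit V) (hwf : (ELP.mk A E R).wf) (hℓ : ℓ.atom ∈ A)
    (hE : E ⊂ E') (hdiff : E' \ E = {ℓ}) :
    {M | (ELP.mk A E R).isCWV M} = {M | (ELP.mk A E' R).isCWV M} :=
  stmt3_general A E E' R hwf hE
end

section
/- Let Π = (𝒜, ℰ, ℛ) be an epistemic logic program with SE-function 𝒮ℰ_Π, let ℳ be a set of interpretations, and let Φ ⊆ ℰ be a guess. Then ℳ is a candidate world view of Π with respect to the guess Φ if and only if ℳ = { Y | (Y,Y) ∈ 𝒮ℰ_Π(Φ) and there is no X ⊊ Y with (X,Y) ∈ 𝒮ℰ_Π(Φ) } and ℳ is Φ-compatible w.r.t. ℰ. -/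
variable {V : Type}

/-! The answer sets of a plain program `Q` are exactly the `Y` such that `(Y, Y)` is an
SE-model of `Q` and no `(X, Y)` with `X ⊂ Y` is. In either direction `Φ` is realizable:
a `Φ`-compatible set of answer sets of `Π^Φ` is a witness, and a nonempty `𝒮ℰ_Π(Φ)` needs it.
So `𝒮ℰ_Π(Φ) = SE(Π^Φ)` and both sides speak about `AS(Π^Φ)`. -/

namespace Program

theorem AS_eq_SE (Q : Program V) :
    Q.AS = {Y | (Y, Y) ∈ Q.SE ∧ ¬ ∃ X, X ⊂ Y ∧ (X, Y) ∈ Q.SE} := by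
  ext Y
  constructor
  · rintro ⟨hYA, hY, hmin⟩
    refine ⟨⟨subset_rfl, hYA, hY, fun r hr hneg hpos => hY r hr ⟨hpos, hneg⟩⟩, ?_⟩
    rintro ⟨X, hXY, -, -, -, hX⟩
    exact hmin ⟨X, hXY, hX⟩
  · rintro ⟨⟨-, hYA, hY, -⟩, hmin⟩
    refine ⟨hYA, hY, ?_⟩
    rintro ⟨X, hXY, hX⟩
    exact hmin ⟨X, hXY, hXY.subset, hYA, hY, hX⟩

end Program

namespace ELP

theorem SEfun_of_realizable {P : ELP V} {Φ : Set (Lit V)} (h : P.realizable Φ) :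
    P.SEfun Φ = (P.eReduct Φ).SE := by
  ext p
  exact and_iff_right h

theorem realizable_of_compatible_AS {P : ELP V} {Φ : Set (Lit V)}
    (h : compatible P.E Φ (P.eReduct Φ).AS) : P.realizable Φ :=
  ⟨_, fun _ hI => ⟨hI.1, hI.2.1⟩, h⟩

end ELP

theorem stmt4_general {V : Type} (P : ELP V) (M : Set (Set V))
    (Φ : Set (Lit V)) (hΦ : Φ ⊆ P.E) :
    P.isCWVwrt Φ M ↔
      (M = {Y | (Y, Y) ∈ P.SEfun Φ ∧ ¬ ∃ X, X ⊂ Y ∧ (X, Y) ∈ P.SEfun Φ} ∧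
        compatible P.E Φ M) := by
  constructor
  · rintro ⟨-, rfl, hcomp⟩
    rw [ELP.SEfun_of_realizable (ELP.realizable_of_compatible_AS hcomp), ← Program.AS_eq_SE]
    exact ⟨rfl, hcomp⟩
  · rintro ⟨hM, hcomp⟩
    obtain ⟨Y, hY⟩ := hcomp.1
    have hreal : P.realizable Φ := by
      rw [hM] at hY
      exact hY.1.1
    rw [ELP.SEfun_of_realizable hreal, ← Program.AS_eq_SE] at hM
    exact ⟨hΦ, hM, hcomp⟩

/-- `M` is a CWV of `P` w.r.t. the guess `Φ` iff
`M = { Y | (Y,Y) ∈ 𝒮ℰ_P(Φ), ¬∃ X ⊂ Y, (X,Y) ∈ 𝒮ℰ_P(Φ) }` and `M` is `Φ`-compatible. -/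
theorem stmt4 {V : Type} (P : ELP V) (hwf : P.wf) (M : Set (Set V))
    (Φ : Set (Lit V)) (hΦ : Φ ⊆ P.E) :
    P.isCWVwrt Φ M ↔
      (M = {Y | (Y, Y) ∈ P.SEfun Φ ∧ ¬ ∃ X, X ⊂ Y ∧ (X, Y) ∈ P.SEfun Φ} ∧
        compatible P.E Φ M) :=
  stmt4_general P M Φ hΦ
end

section
/- If two epistemic logic programs (over the same atom domain 𝒜 and epistemic-literal domain ℰ) have the same SE-function, then they are CWV-equivalent, and hence also WV-equivalent. -/
variable {V : Type}

/-! Answer sets are determined by SE-models, so programs with the same SE-models have the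
same answer sets. If `ℳ` is a
candidate world view of `Π₁` for the guess `Φ`, then `ℳ` itself witnesses that `Φ` is realizable
in `Π₁`, and any `I ∈ ℳ` yields the SE-model `(I, I)` of `Π₁^Φ`. Equality of SE-functions at `Φ`
puts `(I, I)` into the SE-function of `Π₂`, so `Φ` is realizable in `Π₂` as well, and then
`SE(Π₁^Φ) = SE(Π₂^Φ)`. Hence `AS(Π₁^Φ) = AS(Π₂^Φ)`, while compatibility only depends on `ℰ`.
World views are defined from the same relation "`ℳ` is a CWV for `Φ`", so they transfer too. -/

namespace Program

lemma redModel_self_of_model {P : Program V} {I : Set V} (h : P.model I) : P.redModel I I :=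
  fun r hr hneg hpos => h r hr ⟨hpos, hneg⟩

lemma answerSet_iff_mem_SE (P : Program V) (M : Set V) :
    P.answerSet M ↔ (M, M) ∈ P.SE ∧ ∀ X, X ⊂ M → (X, M) ∉ P.SE := by
  constructor
  · rintro ⟨hMA, hmod, hmin⟩
    exact ⟨⟨subset_rfl, hMA, hmod, redModel_self_of_model hmod⟩,
      fun X hX hXSE => hmin ⟨X, hX, hXSE.2.2.2⟩⟩
  · rintro ⟨⟨-, hMA, hmod, -⟩, hmin⟩
    exact ⟨hMA, hmod, fun ⟨M', hM', hred⟩ => hmin M' hM' ⟨hM'.subset, hMA, hmod, hred⟩⟩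

lemma AS_eq_of_SE_eq {P₁ P₂ : Program V} (h : P₁.SE = P₂.SE) : P₁.AS = P₂.AS := by
  ext M
  simp only [AS, Set.mem_ofPred_eq, answerSet_iff_mem_SE, h]

end Program

namespace ELP

variable {P P₁ P₂ : ELP V} {Φ : Set (Lit V)} {M : Set (Set V)}

lemma SEfun_eq_of_realizable (h : P.realizable Φ) : P.SEfun Φ = (P.eReduct Φ).SE := by
  ext p
  exact and_iff_right h

lemma realizable_of_isCWVwrt (h : P.isCWVwrt Φ M) : P.realizable Φ := by
  obtain ⟨-, hM, hcomp⟩ := h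
  refine ⟨M, fun I hI => ?_, hcomp⟩
  rw [hM] at hI
  exact ⟨hI.1, hI.2.1⟩

lemma isCWVwrt_of_SEfun_eq (hE : P₁.E = P₂.E) (h : P₁.SEfun Φ = P₂.SEfun Φ)
    (hc : P₁.isCWVwrt Φ M) : P₂.isCWVwrt Φ M := by
  have hreal₁ := realizable_of_isCWVwrt hc
  obtain ⟨hΦE, hM, hcomp⟩ := hc
  obtain ⟨I, hIM⟩ := hcomp.1
  have hISE : (I, I) ∈ (P₁.eReduct Φ).SE := by
    rw [hM] at hIM
    exact ((Program.answerSet_iff_mem_SE _ I).1 hIM).1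
  have hreal₂ : P₂.realizable Φ := by
    have hmem : (I, I) ∈ P₂.SEfun Φ := h ▸ ⟨hreal₁, hISE⟩
    exact hmem.1
  have hSE : (P₁.eReduct Φ).SE = (P₂.eReduct Φ).SE := by
    rw [← SEfun_eq_of_realizable hreal₁, h, SEfun_eq_of_realizable hreal₂]
  exact ⟨hE ▸ hΦE, hM.trans (Program.AS_eq_of_SE_eq hSE), hE ▸ hcomp⟩

lemma cwvEq_of_isCWVwrt_iff (h : ∀ Φ M, P₁.isCWVwrt Φ M ↔ P₂.isCWVwrt Φ M) :
    cwvEq P₁ P₂ :=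
  fun M => exists_congr fun Φ => h Φ M

lemma wvEq_of_isCWVwrt_iff (h : ∀ Φ M, P₁.isCWVwrt Φ M ↔ P₂.isCWVwrt Φ M) :
    wvEq P₁ P₂ :=
  fun M => exists_congr fun Φ =>
    and_congr (h Φ M) (forall₂_congr fun Φ' M' => imp_congr_left (h Φ' M'))

end ELP

theorem stmt5_general {V : Type} (A : Set V) (E : Set (Lit V)) (R₁ R₂ : Set (ERule V))
    (h : ∀ Φ : Set (Lit V), (ELP.mk A E R₁).SEfun Φ = (ELP.mk A E R₂).SEfun Φ) :
    ELP.cwvEq (ELP.mk A E R₁) (ELP.mk A E R₂) ∧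
      ELP.wvEq (ELP.mk A E R₁) (ELP.mk A E R₂) := by
  have hCWV : ∀ Φ M, (ELP.mk A E R₁).isCWVwrt Φ M ↔ (ELP.mk A E R₂).isCWVwrt Φ M :=
    fun Φ _ => ⟨ELP.isCWVwrt_of_SEfun_eq rfl (h Φ), ELP.isCWVwrt_of_SEfun_eq rfl (h Φ).symm⟩
  exact ⟨ELP.cwvEq_of_isCWVwrt_iff hCWV, ELP.wvEq_of_isCWVwrt_iff hCWV⟩

/-- ELPs (over the same atom domain and epistemic-literal domain) with the
same SE-function are CWV-equivalent, and hence also WV-equivalent. -/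
theorem stmt5 {V : Type} (A : Set V) (E : Set (Lit V)) (R₁ R₂ : Set (ERule V))
    (hwf₁ : (ELP.mk A E R₁).wf) (hwf₂ : (ELP.mk A E R₂).wf)
    (h : ∀ Φ : Set (Lit V), (ELP.mk A E R₁).SEfun Φ = (ELP.mk A E R₂).SEfun Φ) :
    ELP.cwvEq (ELP.mk A E R₁) (ELP.mk A E R₂) ∧
      ELP.wvEq (ELP.mk A E R₁) (ELP.mk A E R₂) :=
  stmt5_general A E R₁ R₂ h
end
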